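/- With A, Δ, η as above (n bosonic pairs, m fermionic pairs), let f ∈ A satisfy Δ(f) = 0 and be a simultaneous eigenvector of the total degree operators: (Σ_i x_i∂_{x_i} + Σ_r θ_r∂_{θ_r})(f) = ℓ f and (Σ_i y_i∂_{y_i} + Σ_r ϑ_r∂_{ϑ_r})(f) = ℓ' f. Then for every positive integer ℓ₄, Δ^{ℓ₄}(η^{ℓ₄} f) = ℓ₄!·[∏_{i=1}^{ℓ₄}(n − m + ℓ + ℓ' + i − 1)]·f. -/
import Mathlib


open TensorProduct MvPolynomial

noncomputable section

variable (n m : ℕ)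

/-- bosonic polynomial part -/
abbrev PolyA (n : ℕ) := MvPolynomial (Fin n ⊕ Fin n) ℂ
/-- fermionic exterior part -/
abbrev ExtA (m : ℕ) := ExteriorAlgebra ℂ ((Fin m ⊕ Fin m) → ℂ)
/-- full supersymmetric algebra -/
abbrev SAlg (n m : ℕ) := PolyA n ⊗[ℂ] ExtA m

-- generators
def xv (i : Fin n) : PolyA n := X (Sum.inl i)
def yv (i : Fin n) : PolyA n := X (Sum.inr i)
def θv (r : Fin m) : ExtA m := ExteriorAlgebra.ι ℂ (Pi.single (Sum.inl r) 1)
def ϑv (r : Fin m) : ExtA m := ExteriorAlgebra.ι ℂ (Pi.single (Sum.inr r) 1)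

-- odd superderivations on the exterior part
def dθ (r : Fin m) : Module.End ℂ (ExtA m) :=
  CliffordAlgebra.contractLeft (Q := (0 : QuadraticForm ℂ ((Fin m ⊕ Fin m) → ℂ)))
    (LinearMap.proj (Sum.inl r))
def dϑ (r : Fin m) : Module.End ℂ (ExtA m) :=
  CliffordAlgebra.contractLeft (Q := (0 : QuadraticForm ℂ ((Fin m ⊕ Fin m) → ℂ)))
    (LinearMap.proj (Sum.inr r))

-- operators on the full algebra
def pdx (i : Fin n) : Module.End ℂ (SAlg n m) :=
  TensorProduct.map ((pderiv (Sum.inl i) : Derivation ℂ (PolyA n) (PolyA n)) : PolyA n →ₗ[ℂ] PolyA n) LinearMap.id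
def pdy (i : Fin n) : Module.End ℂ (SAlg n m) :=
  TensorProduct.map ((pderiv (Sum.inr i) : Derivation ℂ (PolyA n) (PolyA n)) : PolyA n →ₗ[ℂ] PolyA n) LinearMap.id
def pdθ (r : Fin m) : Module.End ℂ (SAlg n m) :=
  TensorProduct.map LinearMap.id (dθ m r)
def pdϑ (r : Fin m) : Module.End ℂ (SAlg n m) :=
  TensorProduct.map LinearMap.id (dϑ m r)

-- multiplication operators
def mx (i : Fin n) : Module.End ℂ (SAlg n m) := LinearMap.mulLeft ℂ (xv n i ⊗ₜ[ℂ] 1)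
def mθ (r : Fin m) : Module.End ℂ (SAlg n m) := LinearMap.mulLeft ℂ ((1 : PolyA n) ⊗ₜ[ℂ] θv m r)

def my (i : Fin n) : Module.End ℂ (SAlg n m) := LinearMap.mulLeft ℂ (yv n i ⊗ₜ[ℂ] 1)
def mϑ (r : Fin m) : Module.End ℂ (SAlg n m) := LinearMap.mulLeft ℂ ((1 : PolyA n) ⊗ₜ[ℂ] ϑv m r)

/-- the element η = Σ_i x_i y_i + Σ_r θ_r ϑ_r of the superalgebra -/
def ηelt : SAlg n m :=
  (∑ i : Fin n, (xv n i * yv n i) ⊗ₜ[ℂ] (1 : ExtA m))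
    + ∑ r : Fin m, (1 : PolyA n) ⊗ₜ[ℂ] (θv m r * ϑv m r)

/-- the super-Laplacian Δ = Σ_i ∂_{x_i}∂_{y_i} + Σ_r ∂_{θ_r}∂_{ϑ_r} -/
def ΔS : Module.End ℂ (SAlg n m) :=
  (∑ i : Fin n, pdx n m i ∘ₗ pdy n m i) + ∑ r : Fin m, pdθ n m r ∘ₗ pdϑ n m r
/-- multiplication by η -/
def ηop : Module.End ℂ (SAlg n m) := LinearMap.mulLeft ℂ (ηelt n m)

/-- the degree operator Σ_i x_i∂_{x_i} + Σ_r θ_r∂_{θ_r} -/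
def degX : Module.End ℂ (SAlg n m) :=
  (∑ i : Fin n, mx n m i ∘ₗ pdx n m i) + ∑ r : Fin m, mθ n m r ∘ₗ pdθ n m r
/-- the degree operator Σ_i y_i∂_{y_i} + Σ_r ϑ_r∂_{ϑ_r} -/
def degY : Module.End ℂ (SAlg n m) :=
  (∑ i : Fin n, my n m i ∘ₗ pdy n m i) + ∑ r : Fin m, mϑ n m r ∘ₗ pdϑ n m r

lemma dθ_θ_mul (r s : Fin m) (w : ExtA m) :
    dθ m r (θv m s * w) = (if r = s then (1:ℂ) else 0) • w - θv m s * dθ m r w := by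
  rw [dθ, θv, CliffordAlgebra.contractLeft_ι_mul]
  simp [Pi.single_apply, eq_comm]

lemma dθ_ϑ_mul (r s : Fin m) (w : ExtA m) :
    dθ m r (ϑv m s * w) = - (ϑv m s * dθ m r w) := by
  rw [dθ, ϑv, CliffordAlgebra.contractLeft_ι_mul]
  simp [Pi.single_apply]

lemma dϑ_ϑ_mul (r s : Fin m) (w : ExtA m) :
    dϑ m r (ϑv m s * w) = (if r = s then (1:ℂ) else 0) • w - ϑv m s * dϑ m r w := by
  rw [dϑ, ϑv, CliffordAlgebra.contractLeft_ι_mul]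
  simp [Pi.single_apply, eq_comm]

lemma dϑ_θ_mul (r s : Fin m) (w : ExtA m) :
    dϑ m r (θv m s * w) = - (θv m s * dϑ m r w) := by
  rw [dϑ, θv, CliffordAlgebra.contractLeft_ι_mul]
  simp [Pi.single_apply]

lemma θ_comm_θϑ (s r : Fin m) :
    θv m s * (θv m r * ϑv m r) = (θv m r * ϑv m r) * θv m s := by
  have h1 : θv m s * θv m r = - (θv m r * θv m s) := by
    have := ExteriorAlgebra.ι_add_mul_swap (R := ℂ) (M := (Fin m ⊕ Fin m) → ℂ) (Pi.single (Sum.inl s) (1:ℂ)) (Pi.single (Sum.inl r) 1)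
    rw [θv, θv]; linear_combination (norm := noncomm_ring) this
  have h2 : θv m s * ϑv m r = - (ϑv m r * θv m s) := by
    have := ExteriorAlgebra.ι_add_mul_swap (R := ℂ) (M := (Fin m ⊕ Fin m) → ℂ) (Pi.single (Sum.inl s) (1:ℂ)) (Pi.single (Sum.inr r) 1)
    rw [θv, ϑv]; linear_combination (norm := noncomm_ring) this
  calc θv m s * (θv m r * ϑv m r) = (θv m s * θv m r) * ϑv m r := by rw [mul_assoc]
  _ = -(θv m r * (θv m s * ϑv m r)) := by rw [h1]; noncomm_ring
  _ = (θv m r * ϑv m r) * θv m s := by rw [h2]; noncomm_ring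

lemma ϑ_comm_θϑ (s r : Fin m) :
    ϑv m s * (θv m r * ϑv m r) = (θv m r * ϑv m r) * ϑv m s := by
  have h1 : ϑv m s * θv m r = - (θv m r * ϑv m s) := by
    have := ExteriorAlgebra.ι_add_mul_swap (R := ℂ) (M := (Fin m ⊕ Fin m) → ℂ) (Pi.single (Sum.inr s) (1:ℂ)) (Pi.single (Sum.inl r) 1)
    rw [θv, ϑv]; linear_combination (norm := noncomm_ring) this
  have h2 : ϑv m s * ϑv m r = - (ϑv m r * ϑv m s) := by
    have := ExteriorAlgebra.ι_add_mul_swap (R := ℂ) (M := (Fin m ⊕ Fin m) → ℂ) (Pi.single (Sum.inr s) (1:ℂ)) (Pi.single (Sum.inr r) 1)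
    rw [ϑv, ϑv]; linear_combination (norm := noncomm_ring) this
  calc ϑv m s * (θv m r * ϑv m r) = (ϑv m s * θv m r) * ϑv m r := by rw [mul_assoc]
  _ = -(θv m r * (ϑv m s * ϑv m r)) := by rw [h1]; noncomm_ring
  _ = (θv m r * ϑv m r) * ϑv m s := by rw [h2]; noncomm_ring

/-- fermionic part of η -/
def cF : ExtA m := ∑ r : Fin m, θv m r * ϑv m r

lemma ddϑ_term (s r : Fin m) (w : ExtA m) :
    dϑ m s (θv m r * ϑv m r * w)
      = -((if s = r then (1:ℂ) else 0) • (θv m r * w)) + (θv m r * ϑv m r) * dϑ m s w := by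
  rw [mul_assoc, dϑ_θ_mul m s r, dϑ_ϑ_mul m s r w]
  split_ifs with h <;> simp [mul_sub, mul_assoc] <;> abel

lemma ddθ_term (s r : Fin m) (w : ExtA m) :
    dθ m s (θv m r * ϑv m r * w)
      = (if s = r then (1:ℂ) else 0) • (ϑv m r * w) + (θv m r * ϑv m r) * dθ m s w := by
  rw [mul_assoc, dθ_θ_mul m s r, dθ_ϑ_mul m s r w]
  split_ifs with h <;> simp [mul_sub, mul_assoc]

lemma F0a (s : Fin m) (w : ExtA m) :
    dϑ m s (cF m * w) = -(θv m s * w) + cF m * dϑ m s w := by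
  rw [cF, Finset.sum_mul, map_sum]
  simp_rw [ddϑ_term]
  rw [Finset.sum_add_distrib, ← Finset.sum_mul, ← cF]
  congr 1
  simp [ite_smul, Finset.sum_ite_eq]

lemma F0b (s : Fin m) (w : ExtA m) :
    dθ m s (cF m * w) = ϑv m s * w + cF m * dθ m s w := by
  rw [cF, Finset.sum_mul, map_sum]
  simp_rw [ddθ_term]
  rw [Finset.sum_add_distrib, ← Finset.sum_mul, ← cF]
  congr 1
  simp [ite_smul, Finset.sum_ite_eq]

lemma θ_comm_cF (s : Fin m) : θv m s * cF m = cF m * θv m s := by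
  rw [cF, Finset.mul_sum, Finset.sum_mul]
  exact Finset.sum_congr rfl fun r _ => θ_comm_θϑ m s r

lemma ϑ_comm_cF (s : Fin m) : ϑv m s * cF m = cF m * ϑv m s := by
  rw [cF, Finset.mul_sum, Finset.sum_mul]
  exact Finset.sum_congr rfl fun r _ => ϑ_comm_θϑ m s r

lemma F1 (w : ExtA m) :
    ∑ s : Fin m, dθ m s (dϑ m s (cF m * w))
      = (∑ s : Fin m, θv m s * dθ m s w) + (∑ s : Fin m, ϑv m s * dϑ m s w)
        + cF m * (∑ s : Fin m, dθ m s (dϑ m s w)) - (m : ℂ) • w := by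
  have step : ∀ s : Fin m, dθ m s (dϑ m s (cF m * w))
      = -w + θv m s * dθ m s w + ϑv m s * dϑ m s w + cF m * dθ m s (dϑ m s w) := by
    intro s
    rw [F0a, map_add, map_neg, dθ_θ_mul m s s, F0b]
    simp
    abel
  simp_rw [step]
  rw [Finset.sum_add_distrib, Finset.sum_add_distrib, Finset.sum_add_distrib, ← Finset.mul_sum,
    Finset.sum_const, Finset.card_univ, Fintype.card_fin]
  have hm : (m : ℂ) • w = m • w := Nat.cast_smul_eq_nsmul ℂ m w
  rw [hm]
  module

lemma F2 (w : ExtA m) :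
    ∑ s : Fin m, θv m s * dθ m s (cF m * w)
      = cF m * w + cF m * ∑ s : Fin m, θv m s * dθ m s w := by
  have step : ∀ s : Fin m, θv m s * dθ m s (cF m * w)
      = θv m s * ϑv m s * w + cF m * (θv m s * dθ m s w) := by
    intro s
    rw [F0b, mul_add, ← mul_assoc, ← mul_assoc, θ_comm_cF, mul_assoc, mul_assoc]
  simp_rw [step]
  rw [Finset.sum_add_distrib, ← Finset.mul_sum, ← Finset.sum_mul, ← cF]

lemma F3 (w : ExtA m) :
    ∑ s : Fin m, ϑv m s * dϑ m s (cF m * w)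
      = cF m * w + cF m * ∑ s : Fin m, ϑv m s * dϑ m s w := by
  have hs : ∀ s : Fin m, -(ϑv m s * θv m s) = θv m s * ϑv m s := by
    intro s
    have := ExteriorAlgebra.ι_add_mul_swap (R := ℂ) (M := (Fin m ⊕ Fin m) → ℂ)
      (Pi.single (Sum.inl s) (1:ℂ)) (Pi.single (Sum.inr s) 1)
    rw [θv, ϑv]; linear_combination (norm := noncomm_ring) -this
  have step : ∀ s : Fin m, ϑv m s * dϑ m s (cF m * w)
      = θv m s * ϑv m s * w + cF m * (ϑv m s * dϑ m s w) := by
    intro s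
    rw [F0a, mul_add]
    congr 1
    · rw [mul_neg, ← mul_assoc, ← neg_mul, hs s]
    · rw [← mul_assoc, ϑ_comm_cF, mul_assoc]
  simp_rw [step]
  rw [Finset.sum_add_distrib, ← Finset.mul_sum, ← Finset.sum_mul, ← cF]

/-- bosonic part of η -/
def cB : PolyA n := ∑ i : Fin n, xv n i * yv n i

lemma pderiv_inl_cB (j : Fin n) : pderiv (Sum.inl j) (cB n) = yv n j := by
  rw [cB, map_sum]
  rw [Finset.sum_eq_single j]
  · simp [xv, yv]
  · intro i _ hij
    simp [xv, yv, pderiv_X, Pi.single_apply, Sum.inl.injEq, hij]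
  · simp

lemma pderiv_inr_cB (j : Fin n) : pderiv (Sum.inr j) (cB n) = xv n j := by
  rw [cB, map_sum]
  rw [Finset.sum_eq_single j]
  · simp [xv, yv]
  · intro i _ hij
    simp [xv, yv, pderiv_X, Pi.single_apply, Sum.inr.injEq, hij]
  · simp

lemma P1 (p : PolyA n) :
    ∑ j : Fin n, pderiv (Sum.inl j) (pderiv (Sum.inr j) (cB n * p))
      = (∑ i : Fin n, xv n i * pderiv (Sum.inl i) p)
        + (∑ i : Fin n, yv n i * pderiv (Sum.inr i) p)
        + cB n * (∑ j : Fin n, pderiv (Sum.inl j) (pderiv (Sum.inr j) p))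
        + (n : ℂ) • p := by
  have step : ∀ j : Fin n, pderiv (Sum.inl j) (pderiv (Sum.inr j) (cB n * p))
      = p + xv n j * pderiv (Sum.inl j) p + yv n j * pderiv (Sum.inr j) p
        + cB n * pderiv (Sum.inl j) (pderiv (Sum.inr j) p) := by
    intro j
    rw [pderiv_mul, pderiv_inr_cB, map_add, pderiv_mul, pderiv_mul, pderiv_inl_cB]
    simp [xv]
    ring
  simp_rw [step]
  rw [Finset.sum_add_distrib, Finset.sum_add_distrib, Finset.sum_add_distrib, ← Finset.mul_sum,
    Finset.sum_const, Finset.card_univ, Fintype.card_fin]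
  have hm : (n : ℂ) • p = n • p := Nat.cast_smul_eq_nsmul ℂ n p
  rw [hm]
  module

lemma P2 (p : PolyA n) :
    ∑ i : Fin n, xv n i * pderiv (Sum.inl i) (cB n * p)
      = cB n * p + cB n * ∑ i : Fin n, xv n i * pderiv (Sum.inl i) p := by
  have step : ∀ i : Fin n, xv n i * pderiv (Sum.inl i) (cB n * p)
      = xv n i * yv n i * p + cB n * (xv n i * pderiv (Sum.inl i) p) := by
    intro i
    rw [pderiv_mul, pderiv_inl_cB]
    ring
  simp_rw [step]
  rw [Finset.sum_add_distrib, ← Finset.mul_sum, ← Finset.sum_mul, ← cB]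

lemma P3 (p : PolyA n) :
    ∑ i : Fin n, yv n i * pderiv (Sum.inr i) (cB n * p)
      = cB n * p + cB n * ∑ i : Fin n, yv n i * pderiv (Sum.inr i) p := by
  have step : ∀ i : Fin n, yv n i * pderiv (Sum.inr i) (cB n * p)
      = xv n i * yv n i * p + cB n * (yv n i * pderiv (Sum.inr i) p) := by
    intro i
    rw [pderiv_mul, pderiv_inr_cB]
    ring
  simp_rw [step]
  rw [Finset.sum_add_distrib, ← Finset.mul_sum, ← Finset.sum_mul, ← cB]


lemma ΔS_tmul (p : PolyA n) (w : ExtA m) :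
    ΔS n m (p ⊗ₜ[ℂ] w)
      = (∑ j : Fin n, pderiv (Sum.inl j) (pderiv (Sum.inr j) p)) ⊗ₜ[ℂ] w
        + p ⊗ₜ[ℂ] (∑ s : Fin m, dθ m s (dϑ m s w)) := by
  rw [ΔS, LinearMap.add_apply, LinearMap.sum_apply, LinearMap.sum_apply,
    TensorProduct.sum_tmul, TensorProduct.tmul_sum]
  congr 1 <;> refine Finset.sum_congr rfl fun j _ => ?_ <;>
    simp [pdx, pdy, pdθ, pdϑ]

lemma degX_tmul (p : PolyA n) (w : ExtA m) :
    degX n m (p ⊗ₜ[ℂ] w)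
      = (∑ i : Fin n, xv n i * pderiv (Sum.inl i) p) ⊗ₜ[ℂ] w
        + p ⊗ₜ[ℂ] (∑ s : Fin m, θv m s * dθ m s w) := by
  rw [degX, LinearMap.add_apply, LinearMap.sum_apply, LinearMap.sum_apply,
    TensorProduct.sum_tmul, TensorProduct.tmul_sum]
  congr 1 <;> refine Finset.sum_congr rfl fun j _ => ?_ <;>
    simp [mx, mθ, pdx, pdθ, LinearMap.mulLeft_apply, Algebra.TensorProduct.tmul_mul_tmul]

lemma degY_tmul (p : PolyA n) (w : ExtA m) :
    degY n m (p ⊗ₜ[ℂ] w)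
      = (∑ i : Fin n, yv n i * pderiv (Sum.inr i) p) ⊗ₜ[ℂ] w
        + p ⊗ₜ[ℂ] (∑ s : Fin m, ϑv m s * dϑ m s w) := by
  rw [degY, LinearMap.add_apply, LinearMap.sum_apply, LinearMap.sum_apply,
    TensorProduct.sum_tmul, TensorProduct.tmul_sum]
  congr 1 <;> refine Finset.sum_congr rfl fun j _ => ?_ <;>
    simp [my, mϑ, pdy, pdϑ, LinearMap.mulLeft_apply, Algebra.TensorProduct.tmul_mul_tmul]

lemma ηop_tmul (p : PolyA n) (w : ExtA m) :
    ηop n m (p ⊗ₜ[ℂ] w) = (cB n * p) ⊗ₜ[ℂ] w + p ⊗ₜ[ℂ] (cF m * w) := by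
  rw [ηop, LinearMap.mulLeft_apply, ηelt, add_mul, Finset.sum_mul, Finset.sum_mul,
    cB, cF, Finset.sum_mul, Finset.sum_mul, TensorProduct.sum_tmul, TensorProduct.tmul_sum]
  congr 1 <;> exact Finset.sum_congr rfl fun i _ => by
    simp [Algebra.TensorProduct.tmul_mul_tmul]

lemma comm_Δη (g : SAlg n m) :
    ΔS n m (ηop n m g)
      = ηop n m (ΔS n m g) + degX n m g + degY n m g + ((n : ℂ) - m) • g := by
  induction g using TensorProduct.induction_on with
  | zero => simp
  | add a b ha hb => simp only [map_add, smul_add, ha, hb]; abel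
  | tmul p w =>
    rw [ηop_tmul, map_add, ΔS_tmul, ΔS_tmul, ΔS_tmul, map_add, ηop_tmul, ηop_tmul,
      degX_tmul, degY_tmul, P1, F1]
    simp only [add_tmul, tmul_add, sub_tmul, tmul_sub, smul_tmul', tmul_smul, sub_smul]
    abel

lemma comm_degXη (g : SAlg n m) :
    degX n m (ηop n m g) = ηop n m (degX n m g) + ηop n m g := by
  induction g using TensorProduct.induction_on with
  | zero => simp
  | add a b ha hb => simp only [map_add, ha, hb]; abel
  | tmul p w =>
    rw [ηop_tmul, map_add, degX_tmul, degX_tmul, degX_tmul, map_add, ηop_tmul, ηop_tmul,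
      P2, F2]
    simp only [add_tmul, tmul_add]
    abel

lemma comm_degYη (g : SAlg n m) :
    degY n m (ηop n m g) = ηop n m (degY n m g) + ηop n m g := by
  induction g using TensorProduct.induction_on with
  | zero => simp
  | add a b ha hb => simp only [map_add, ha, hb]; abel
  | tmul p w =>
    rw [ηop_tmul, map_add, degY_tmul, degY_tmul, degY_tmul, map_add, ηop_tmul, ηop_tmul,
      P3, F3]
    simp only [add_tmul, tmul_add]
    abel

lemma eigX_pow (f : SAlg n m) (l : ℕ) (hX : degX n m f = (l : ℂ) • f) :
    ∀ k : ℕ, degX n m ((ηop n m ^ k) f) = ((l : ℂ) + k) • (ηop n m ^ k) f := by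
  intro k
  induction k with
  | zero => simpa using hX
  | succ k ih =>
    rw [pow_succ', Module.End.mul_apply, comm_degXη, ih, map_smul]
    have : ((l : ℂ) + (k + 1 : ℕ)) = ((l : ℂ) + k) + 1 := by push_cast; ring
    rw [this]; module

lemma eigY_pow (f : SAlg n m) (l : ℕ) (hY : degY n m f = (l : ℂ) • f) :
    ∀ k : ℕ, degY n m ((ηop n m ^ k) f) = ((l : ℂ) + k) • (ηop n m ^ k) f := by
  intro k
  induction k with
  | zero => simpa using hY
  | succ k ih =>
    rw [pow_succ', Module.End.mul_apply, comm_degYη, ih, map_smul]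
    have : ((l : ℂ) + (k + 1 : ℕ)) = ((l : ℂ) + k) + 1 := by push_cast; ring
    rw [this]; module

lemma ΔS_eta_pow (f : SAlg n m) (ℓ ℓ' : ℕ)
    (hf : ΔS n m f = 0)
    (hX : degX n m f = (ℓ : ℂ) • f) (hY : degY n m f = (ℓ' : ℂ) • f) :
    ∀ k : ℕ, ΔS n m ((ηop n m ^ (k + 1)) f)
      = (((k : ℂ) + 1) * (((n : ℂ) - m + ℓ + ℓ') + k)) • (ηop n m ^ k) f := by
  intro k
  induction k with
  | zero =>
    rw [pow_one, pow_zero, Module.End.one_apply, comm_Δη, hf, map_zero, hX, hY]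
    module
  | succ k ih =>
    rw [pow_succ', Module.End.mul_apply, comm_Δη, ih, map_smul, ← Module.End.mul_apply
      (ηop n m), ← pow_succ', eigX_pow n m f ℓ hX, eigY_pow n m f ℓ' hY]
    push_cast
    module

lemma main_pow (f : SAlg n m) (ℓ ℓ' : ℕ)
    (hf : ΔS n m f = 0)
    (hX : degX n m f = (ℓ : ℂ) • f) (hY : degY n m f = (ℓ' : ℂ) • f) :
    ∀ L : ℕ, (ΔS n m ^ L) ((ηop n m ^ L) f)
      = (∏ k ∈ Finset.Icc 1 L, ((k : ℂ) * (((n : ℂ) - m + ℓ + ℓ') + k - 1))) • f := by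
  intro L
  induction L with
  | zero => simp
  | succ L ih =>
    rw [pow_succ (ΔS n m), Module.End.mul_apply, ΔS_eta_pow n m f ℓ ℓ' hf hX hY, map_smul,
      ih, smul_smul, Finset.prod_Icc_succ_top (Nat.succ_le_succ (Nat.zero_le L))]
    congr 1
    push_cast
    ring

theorem delta_pow_eta_pow (f : SAlg n m) (ℓ ℓ' : ℕ)
    (hf : ΔS n m f = 0)
    (hX : degX n m f = (ℓ : ℂ) • f) (hY : degY n m f = (ℓ' : ℂ) • f) :
    ∀ ℓ₄ : ℕ, 1 ≤ ℓ₄ →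
      (ΔS n m ^ ℓ₄) ((ηop n m ^ ℓ₄) f)
        = ((ℓ₄.factorial : ℂ)
            * ∏ i ∈ Finset.Icc 1 ℓ₄, ((n : ℂ) - m + ℓ + ℓ' + i - 1)) • f := by
  intro ℓ₄ _
  rw [main_pow n m f ℓ ℓ' hf hX hY ℓ₄]
  congr 1
  rw [Finset.prod_mul_distrib]
  congr 1
  rw [show ((ℓ₄.factorial : ℂ)) = ((ℓ₄.factorial : ℕ) : ℂ) from rfl,
    ← Finset.prod_Ico_id_eq_factorial ℓ₄, Nat.cast_prod, Finset.Ico_add_one_right_eq_Icc]
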